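/- arXiv:1506.07686 — 4 statements merged into one kernel-verified Lean document; each statement's English description precedes it below -/
import Mathlib

section
/- The quasi-shuffle product on the free noncommutative polynomial algebra K⟨A⟩ is commutative: for all words u, v, u * v = v * u. -/
/-- **Commutativity of the quasi-shuffle product.**
Let `K` be a field of characteristic zero and `A` an alphabet equipped with a commutative,
associative bracket `br`.  The quasi-shuffle product `m`, taking values in the free module
`K⟨A⟩` of formal `K`-linear combinations of words (modelled as `List A →₀ K`), is determined
recursively by `u * 1 = 1 * u = u` (the empty word is the unit) and
`(ua) * (vb) = (u * vb)a + (ua * v)b + (u * v)[a,b]`.  Then `m` is commutative: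
for all words `u v`, `u * v = v * u`. -/
theorem quasiShuffle_comm {A : Type} [DecidableEq A] {K : Type} [Field K] [CharZero K]
    (br : A → A → A)
    (hbr_comm : ∀ a b, br a b = br b a)
    (hbr_assoc : ∀ a b c, br (br a b) c = br a (br b c))
    (m : List A → List A → (List A →₀ K))
    (hm_right_unit : ∀ u, m u [] = Finsupp.single u 1)
    (hm_left_unit : ∀ v, m [] v = Finsupp.single v 1)
    (hm_rec : ∀ u v a b, m (u ++ [a]) (v ++ [b]) =
        Finsupp.mapDomain (· ++ [a]) (m u (v ++ [b]))
        + Finsupp.mapDomain (· ++ [b]) (m (u ++ [a]) v)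
        + Finsupp.mapDomain (· ++ [br a b]) (m u v)) :
    ∀ u v : List A, m u v = m v u := by
  have key : ∀ n (u v : List A), u.length + v.length = n → m u v = m v u := by
    intro n
    induction n using Nat.strong_induction_on with
    | _ n ih =>
      intro u v hn
      rcases u.eq_nil_or_concat with rfl | ⟨u', a, rfl⟩
      · rw [hm_left_unit, hm_right_unit]
      rcases v.eq_nil_or_concat with rfl | ⟨v', b, rfl⟩
      · rw [hm_left_unit, hm_right_unit]
      simp only [List.concat_eq_append] at hn ⊢
      rw [hm_rec, hm_rec, hbr_comm b a]
      rw [ih (u'.length + (v' ++ [b]).length) (by simp at hn ⊢; omega) u' (v' ++ [b]) rfl]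
      rw [ih ((u' ++ [a]).length + v'.length) (by simp at hn ⊢; omega) (u' ++ [a]) v' rfl]
      rw [ih (u'.length + v'.length) (by simp at hn ⊢; omega) u' v' rfl]
      abel
  exact fun u v => key _ u v rfl
end

section
/- The quasi-shuffle product on K⟨A⟩ is associative: for all words u, v, w, (u * v) * w = u * (v * w). -/
/-- The bilinear extension of a word-indexed product `m` to `K⟨A⟩ = List A →₀ K`. -/
noncomputable def mExt {A : Type} {K : Type} [Field K]
    (m : List A → List A → (List A →₀ K)) (x y : List A →₀ K) : List A →₀ K :=
  x.sum fun u c => y.sum fun v d => (c * d) • m u v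

/-!
Both `(u * v) * w` and `u * (v * w)`, as functions of three words, obey the same seven-term
recursion when a last letter is split off each word: expanding the inner product by the
quasi-shuffle recursion and then the outer one (extended bilinearly to `K⟨A⟩`) gives terms indexed
by the nonempty subsets of the three last letters, with the letters of a subset merged by the
bracket. Associativity of the bracket identifies the two merged letters `[[a,b],c] = [a,[b,c]]`,
and the unit laws make both sides agree when a word is empty, so induction on the total length
finishes the proof.
-/

namespace QuasiShuffle

variable {A K : Type} [Field K]

/-- The recursion `(ua) * (vb) = (u * vb)a + (ua * v)b + (u * v)[a,b]`; appending a letter is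
`Finsupp.mapDomain (· ++ [a])`. -/
def SatisfiesRec (br : A → A → A) (m : List A → List A → (List A →₀ K)) : Prop :=
  ∀ u v a b, m (u ++ [a]) (v ++ [b]) =
    Finsupp.mapDomain (· ++ [a]) (m u (v ++ [b]))
    + Finsupp.mapDomain (· ++ [b]) (m (u ++ [a]) v)
    + Finsupp.mapDomain (· ++ [br a b]) (m u v)

variable (m : List A → List A → (List A →₀ K))

lemma mExt_single_single (u v : List A) (c d : K) :
    mExt m (Finsupp.single u c) (Finsupp.single v d) = (c * d) • m u v := by
  unfold mExt
  rw [Finsupp.sum_single_index (by simp), Finsupp.sum_single_index (by simp)]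

lemma mExt_zero_left (y : List A →₀ K) : mExt m 0 y = 0 := by
  simp [mExt]

lemma mExt_zero_right (x : List A →₀ K) : mExt m x 0 = 0 := by
  simp [mExt]

lemma mExt_add_left (x y z : List A →₀ K) :
    mExt m (x + y) z = mExt m x z + mExt m y z :=
  Finsupp.sum_add_index' (by simp)
    (by intros; simp only [add_mul, add_smul, Finsupp.sum_add])

lemma mExt_add_right (x y z : List A →₀ K) :
    mExt m x (y + z) = mExt m x y + mExt m x z := by
  unfold mExt
  rw [← Finsupp.sum_add]
  congr 1
  funext u c
  exact Finsupp.sum_add_index' (by simp) (by intros; simp only [mul_add, add_smul])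

lemma mExt_nil_right (hm_right_unit : ∀ u, m u [] = Finsupp.single u 1)
    (x : List A →₀ K) : mExt m x (Finsupp.single [] 1) = x := by
  induction x using Finsupp.induction_linear with
  | zero => exact mExt_zero_left m _
  | add x y hx hy => rw [mExt_add_left, hx, hy]
  | single u c => simp [mExt_single_single, hm_right_unit, Finsupp.smul_single]

lemma mExt_nil_left (hm_left_unit : ∀ v, m [] v = Finsupp.single v 1)
    (y : List A →₀ K) : mExt m (Finsupp.single [] 1) y = y := by
  induction y using Finsupp.induction_linear with
  | zero => exact mExt_zero_right m _
  | add x y hx hy => rw [mExt_add_right, hx, hy]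
  | single v d => simp [mExt_single_single, hm_left_unit, Finsupp.smul_single]

lemma mExt_mapDomain_append {br : A → A → A} (hm_rec : SatisfiesRec br m)
    (x y : List A →₀ K) (a b : A) :
    mExt m (Finsupp.mapDomain (· ++ [a]) x) (Finsupp.mapDomain (· ++ [b]) y)
      = Finsupp.mapDomain (· ++ [a]) (mExt m x (Finsupp.mapDomain (· ++ [b]) y))
      + Finsupp.mapDomain (· ++ [b]) (mExt m (Finsupp.mapDomain (· ++ [a]) x) y)
      + Finsupp.mapDomain (· ++ [br a b]) (mExt m x y) := by
  induction x using Finsupp.induction_linear with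
  | zero => simp [mExt_zero_left]
  | add x x' hx hx' =>
    simp only [Finsupp.mapDomain_add, mExt_add_left, hx, hx']
    abel
  | single u c =>
    induction y using Finsupp.induction_linear with
    | zero => simp [mExt_zero_right]
    | add y y' hy hy' =>
      simp only [Finsupp.mapDomain_add, mExt_add_right, hy, hy']
      abel
    | single v d =>
      simp only [Finsupp.mapDomain_single, mExt_single_single, hm_rec u v a b, smul_add,
        Finsupp.mapDomain_smul]

/-- The ternary recursion obeyed by both `(u * v) * w` and `u * (v * w)`. -/
def SatisfiesRec₃ (br : A → A → A) (F : List A → List A → List A → (List A →₀ K)) : Prop :=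
  ∀ u v w a b c, F (u ++ [a]) (v ++ [b]) (w ++ [c]) =
    Finsupp.mapDomain (· ++ [a]) (F u (v ++ [b]) (w ++ [c]))
    + Finsupp.mapDomain (· ++ [b]) (F (u ++ [a]) v (w ++ [c]))
    + Finsupp.mapDomain (· ++ [c]) (F (u ++ [a]) (v ++ [b]) w)
    + Finsupp.mapDomain (· ++ [br a b]) (F u v (w ++ [c]))
    + Finsupp.mapDomain (· ++ [br a c]) (F u (v ++ [b]) w)
    + Finsupp.mapDomain (· ++ [br b c]) (F (u ++ [a]) v w)
    + Finsupp.mapDomain (· ++ [br (br a b) c]) (F u v w)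

theorem SatisfiesRec₃.eq {br : A → A → A} {F G : List A → List A → List A → (List A →₀ K)}
    (hF : SatisfiesRec₃ br F) (hG : SatisfiesRec₃ br G)
    (h_nil : ∀ u v w, u = [] ∨ v = [] ∨ w = [] → F u v w = G u v w) (u v w : List A) :
    F u v w = G u v w := by
  rcases List.eq_nil_or_concat' u with rfl | ⟨u, a, rfl⟩
  · exact h_nil _ _ _ (.inl rfl)
  rcases List.eq_nil_or_concat' v with rfl | ⟨v, b, rfl⟩
  · exact h_nil _ _ _ (.inr (.inl rfl))
  rcases List.eq_nil_or_concat' w with rfl | ⟨w, c, rfl⟩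
  · exact h_nil _ _ _ (.inr (.inr rfl))
  rw [hF, hG, hF.eq hG h_nil u, hF.eq hG h_nil (u ++ [a]) v, hF.eq hG h_nil _ _ w,
    hF.eq hG h_nil u v, hF.eq hG h_nil u (v ++ [b]) w, hF.eq hG h_nil (u ++ [a]) v w,
    hF.eq hG h_nil u v w]
termination_by u.length + v.length + w.length

lemma single_append_eq_mapDomain (w : List A) (c : A) :
    Finsupp.single (w ++ [c]) (1 : K) = Finsupp.mapDomain (· ++ [c]) (Finsupp.single w 1) := by
  rw [Finsupp.mapDomain_single]

lemma satisfiesRec₃_mExt_left {br : A → A → A} (hm_rec : SatisfiesRec br m) :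
    SatisfiesRec₃ br fun u v w => mExt m (m u v) (Finsupp.single w 1) := by
  intro u v w a b c
  beta_reduce
  conv_lhs => rw [hm_rec, single_append_eq_mapDomain]
  rw [mExt_add_left, mExt_add_left, mExt_mapDomain_append m hm_rec,
    mExt_mapDomain_append m hm_rec, mExt_mapDomain_append m hm_rec,
    ← single_append_eq_mapDomain, hm_rec u v a b, mExt_add_left, mExt_add_left,
    Finsupp.mapDomain_add, Finsupp.mapDomain_add]
  abel

lemma satisfiesRec₃_mExt_right {br : A → A → A}
    (hbr_assoc : ∀ a b c, br (br a b) c = br a (br b c)) (hm_rec : SatisfiesRec br m) :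
    SatisfiesRec₃ br fun u v w => mExt m (Finsupp.single u 1) (m v w) := by
  intro u v w a b c
  beta_reduce
  conv_lhs => rw [hm_rec, single_append_eq_mapDomain]
  rw [mExt_add_right, mExt_add_right, mExt_mapDomain_append m hm_rec,
    mExt_mapDomain_append m hm_rec, mExt_mapDomain_append m hm_rec,
    ← single_append_eq_mapDomain, hm_rec v w b c, mExt_add_right, mExt_add_right,
    Finsupp.mapDomain_add, Finsupp.mapDomain_add, hbr_assoc]
  abel

lemma mExt_assoc_of_nil (hm_right_unit : ∀ u, m u [] = Finsupp.single u 1)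
    (hm_left_unit : ∀ v, m [] v = Finsupp.single v 1) (u v w : List A)
    (h_nil : u = [] ∨ v = [] ∨ w = []) :
    mExt m (m u v) (Finsupp.single w 1) = mExt m (Finsupp.single u 1) (m v w) := by
  have h_single (u v : List A) : mExt m (Finsupp.single u 1) (Finsupp.single v 1) = m u v := by
    rw [mExt_single_single, one_mul, one_smul]
  rcases h_nil with rfl | rfl | rfl
  · rw [hm_left_unit, h_single, mExt_nil_left m hm_left_unit]
  · rw [hm_left_unit, hm_right_unit]
  · rw [hm_right_unit, h_single, mExt_nil_right m hm_right_unit]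

end QuasiShuffle

theorem quasiShuffle_assoc_general {A : Type} {K : Type} [Field K]
    (br : A → A → A)
    (hbr_assoc : ∀ a b c, br (br a b) c = br a (br b c))
    (m : List A → List A → (List A →₀ K))
    (hm_right_unit : ∀ u, m u [] = Finsupp.single u 1)
    (hm_left_unit : ∀ v, m [] v = Finsupp.single v 1)
    (hm_rec : ∀ u v a b, m (u ++ [a]) (v ++ [b]) =
        Finsupp.mapDomain (· ++ [a]) (m u (v ++ [b]))
        + Finsupp.mapDomain (· ++ [b]) (m (u ++ [a]) v)
        + Finsupp.mapDomain (· ++ [br a b]) (m u v)) :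
    ∀ u v w : List A,
      mExt m (m u v) (Finsupp.single w 1) = mExt m (Finsupp.single u 1) (m v w) :=
  (QuasiShuffle.satisfiesRec₃_mExt_left m hm_rec).eq
    (QuasiShuffle.satisfiesRec₃_mExt_right m hbr_assoc hm_rec)
    (QuasiShuffle.mExt_assoc_of_nil m hm_right_unit hm_left_unit)

/-- **Associativity of the quasi-shuffle product.**
Let `K` be a field of characteristic zero and `A` an alphabet with a commutative, associative
bracket `br`.  Let `m` be the quasi-shuffle product on words, determined recursively by
`u * 1 = 1 * u = u` and `(ua) * (vb) = (u * vb)a + (ua * v)b + (u * v)[a,b]`.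
Then for all words `u v w`, `(u * v) * w = u * (v * w)` (where the outer products are the
bilinear extension of `m` to `K⟨A⟩`). -/
theorem quasiShuffle_assoc {A : Type} [DecidableEq A] {K : Type} [Field K] [CharZero K]
    (br : A → A → A)
    (hbr_comm : ∀ a b, br a b = br b a)
    (hbr_assoc : ∀ a b c, br (br a b) c = br a (br b c))
    (m : List A → List A → (List A →₀ K))
    (hm_right_unit : ∀ u, m u [] = Finsupp.single u 1)
    (hm_left_unit : ∀ v, m [] v = Finsupp.single v 1)
    (hm_rec : ∀ u v a b, m (u ++ [a]) (v ++ [b]) =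
        Finsupp.mapDomain (· ++ [a]) (m u (v ++ [b]))
        + Finsupp.mapDomain (· ++ [b]) (m (u ++ [a]) v)
        + Finsupp.mapDomain (· ++ [br a b]) (m u v)) :
    ∀ u v w : List A,
      mExt m (m u v) (Finsupp.single w 1) = mExt m (Finsupp.single u 1) (m v w) :=
  quasiShuffle_assoc_general br hbr_assoc m hm_right_unit hm_left_unit hm_rec
end

section
/- The quasi-shuffle product is a coalgebra morphism with respect to deconcatenation: Δ(u * v) = Δ(u) * Δ(v), where the product on K⟨A⟩ ⊗ K⟨A⟩ is componentwise quasi-shuffle. -/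
/-- The deconcatenation coproduct `Δ(w) = Σ_{uv = w} u ⊗ v`, with `K⟨A⟩ ⊗ K⟨A⟩` modelled
as finitely supported functions on pairs of words. -/
noncomputable def deconcat {A : Type} {K : Type} [Field K] (w : List A) :
    (List A × List A) →₀ K :=
  ∑ i ∈ Finset.range (w.length + 1), Finsupp.single (w.take i, w.drop i) 1

/-- Linear extension of the deconcatenation coproduct to `K⟨A⟩`. -/
noncomputable def deconcatExt {A : Type} {K : Type} [Field K] (x : List A →₀ K) :
    (List A × List A) →₀ K :=
  x.sum fun w c => c • deconcat w

/-- The componentwise quasi-shuffle product on `K⟨A⟩ ⊗ K⟨A⟩`: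
`(u₁ ⊗ u₂)(v₁ ⊗ v₂) = (u₁ * v₁) ⊗ (u₂ * v₂)`. -/
noncomputable def pairMul {A : Type} {K : Type} [Field K]
    (m : List A → List A → (List A →₀ K))
    (x y : (List A × List A) →₀ K) : (List A × List A) →₀ K :=
  x.sum fun p c => y.sum fun q d =>
    (m p.1 q.1).sum fun w₁ e => (m p.2 q.2).sum fun w₂ f =>
      (c * d * e * f) • Finsupp.single (w₁, w₂) 1

/-!
Induction on `u = u'a` and `v = v'b`. Write `ρ_a` for appending `a` to the right tensor factor
(`Finsupp.mapDomain (Prod.map id (· ++ [a]))`). Deconcatenation satisfies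
`Δ(wa) = ρ_a Δ(w) + wa ⊗ 1`, and the recursion for `*` in the right factor gives
`ρ_a X * ρ_b Y = ρ_a (X * ρ_b Y) + ρ_b (ρ_a X * Y) + ρ_[a,b] (X * Y)`, while the unit laws make
`ρ_a` commute with multiplication by `w ⊗ 1`. Expanding both `Δ(u'a * v'b)` and
`Δ(u'a) * Δ(v'b)` with these rules gives the same three `ρ`-terms, which agree by induction,
plus `(u'a * v'b) ⊗ 1` on each side.
-/

section PureTensor

variable {α β γ K : Type} [CommSemiring K]

noncomputable def pureTensor (x : α →₀ K) (y : β →₀ K) : α × β →₀ K :=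
  x.sum fun w₁ e => y.sum fun w₂ f => (e * f) • Finsupp.single (w₁, w₂) 1

lemma pureTensor_single_single (w₁ : α) (w₂ : β) (e f : K) :
    pureTensor (Finsupp.single w₁ e) (Finsupp.single w₂ f)
      = (e * f) • Finsupp.single (w₁, w₂) 1 := by
  simp [pureTensor]

lemma pureTensor_zero_left (y : β →₀ K) : pureTensor (0 : α →₀ K) y = 0 := by
  simp [pureTensor]

lemma pureTensor_zero_right (x : α →₀ K) : pureTensor x (0 : β →₀ K) = 0 := by
  simp [pureTensor]

lemma pureTensor_add_left (x x' : α →₀ K) (y : β →₀ K) :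
    pureTensor (x + x') y = pureTensor x y + pureTensor x' y := by
  refine Finsupp.sum_add_index' (fun _ => by simp) fun _ e₁ e₂ => ?_
  simp only [add_mul, add_smul, Finsupp.sum_add]

lemma pureTensor_add_right (x : α →₀ K) (y y' : β →₀ K) :
    pureTensor x (y + y') = pureTensor x y + pureTensor x y' := by
  rw [pureTensor, pureTensor, pureTensor, ← Finsupp.sum_add]
  refine Finsupp.sum_congr fun _ _ => Finsupp.sum_add_index' (fun _ => by simp) ?_
  intro _ f₁ f₂
  rw [mul_add, add_smul]

lemma pureTensor_mapDomain_right (g : β → γ) (x : α →₀ K) (y : β →₀ K) :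
    pureTensor x (Finsupp.mapDomain g y) = Finsupp.mapDomain (Prod.map id g) (pureTensor x y) := by
  induction y using Finsupp.induction_linear with
  | zero => simp [pureTensor_zero_right]
  | add y y' hy hy' =>
    rw [Finsupp.mapDomain_add, pureTensor_add_right, pureTensor_add_right, hy, hy',
      Finsupp.mapDomain_add]
  | single w f =>
    induction x using Finsupp.induction_linear with
    | zero => simp [pureTensor_zero_left]
    | add x x' hx hx' =>
      rw [pureTensor_add_left, pureTensor_add_left, hx, hx', Finsupp.mapDomain_add]
    | single w₁ e =>
      rw [Finsupp.mapDomain_single, pureTensor_single_single, pureTensor_single_single,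
        Finsupp.mapDomain_smul, Finsupp.mapDomain_single, Prod.map_apply, id]

lemma pureTensor_single_right (x : α →₀ K) (w : β) :
    pureTensor x (Finsupp.single w 1) = Finsupp.mapDomain (fun w₁ => (w₁, w)) x := by
  refine Finsupp.sum_congr fun w₁ _ => ?_
  rw [Finsupp.sum_single_index (by simp), mul_one, Finsupp.smul_single_one]

end PureTensor

section PairMul

variable {A K : Type} [Field K] (m : List A → List A → (List A →₀ K))

lemma pairMul_eq_sum (x y : (List A × List A) →₀ K) :
    pairMul m x y
      = x.sum fun p c => c • y.sum fun q d => d • pureTensor (m p.1 q.1) (m p.2 q.2) := by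
  refine Finsupp.sum_congr fun p _ => ?_
  rw [Finsupp.smul_sum]
  refine Finsupp.sum_congr fun q _ => ?_
  simp only [pureTensor, Finsupp.smul_sum, smul_smul]
  refine Finsupp.sum_congr fun w₁ _ => Finsupp.sum_congr fun w₂ _ => ?_
  ring_nf

lemma pairMul_single_single (p q : List A × List A) (c d : K) :
    pairMul m (Finsupp.single p c) (Finsupp.single q d)
      = (c * d) • pureTensor (m p.1 q.1) (m p.2 q.2) := by
  rw [pairMul_eq_sum, Finsupp.sum_single_index (by simp), Finsupp.sum_single_index (by simp),
    smul_smul]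

lemma pairMul_zero_left (y : (List A × List A) →₀ K) : pairMul m 0 y = 0 := by
  rw [pairMul_eq_sum, Finsupp.sum_zero_index]

lemma pairMul_zero_right (x : (List A × List A) →₀ K) : pairMul m x 0 = 0 := by
  simp [pairMul_eq_sum]

lemma pairMul_add_left (x x' y : (List A × List A) →₀ K) :
    pairMul m (x + x') y = pairMul m x y + pairMul m x' y := by
  simp only [pairMul_eq_sum]
  exact Finsupp.sum_add_index' (fun _ => zero_smul _ _) fun _ _ _ => add_smul _ _ _

lemma pairMul_add_right (x y y' : (List A × List A) →₀ K) :
    pairMul m x (y + y') = pairMul m x y + pairMul m x y' := by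
  simp only [pairMul_eq_sum, ← Finsupp.sum_add, ← smul_add]
  refine Finsupp.sum_congr fun _ _ => congrArg _ ?_
  exact Finsupp.sum_add_index' (fun _ => zero_smul _ _) fun _ _ _ => add_smul _ _ _

lemma pairMul_single_nil_nil_right (hm_right_unit : ∀ u, m u [] = Finsupp.single u 1)
    (x : (List A × List A) →₀ K) : pairMul m x (Finsupp.single ([], []) 1) = x := by
  induction x using Finsupp.induction_linear with
  | zero => exact pairMul_zero_left m _
  | add x x' hx hx' => rw [pairMul_add_left, hx, hx']
  | single p c =>
    rw [pairMul_single_single, hm_right_unit, hm_right_unit, pureTensor_single_single, mul_one,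
      mul_one, one_smul, Prod.mk.eta, Finsupp.smul_single_one]

lemma pairMul_single_nil_nil_left (hm_left_unit : ∀ v, m [] v = Finsupp.single v 1)
    (y : (List A × List A) →₀ K) : pairMul m (Finsupp.single ([], []) 1) y = y := by
  induction y using Finsupp.induction_linear with
  | zero => exact pairMul_zero_right m _
  | add y y' hy hy' => rw [pairMul_add_right, hy, hy']
  | single q d =>
    rw [pairMul_single_single, hm_left_unit, hm_left_unit, pureTensor_single_single, one_mul,
      mul_one, one_smul, Prod.mk.eta, Finsupp.smul_single_one]

lemma pairMul_single_nil_single_nil (hm_right_unit : ∀ u, m u [] = Finsupp.single u 1)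
    (u v : List A) :
    pairMul m (Finsupp.single (u, []) 1) (Finsupp.single (v, []) 1)
      = Finsupp.mapDomain (fun w => (w, [])) (m u v) := by
  rw [pairMul_single_single, hm_right_unit, pureTensor_single_right, one_mul, one_smul]

lemma pairMul_mapDomain_concat_single_nil (hm_right_unit : ∀ u, m u [] = Finsupp.single u 1)
    (a : A) (v : List A) (x : (List A × List A) →₀ K) :
    pairMul m (Finsupp.mapDomain (Prod.map id (· ++ [a])) x) (Finsupp.single (v, []) 1)
      = Finsupp.mapDomain (Prod.map id (· ++ [a])) (pairMul m x (Finsupp.single (v, []) 1)) := by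
  induction x using Finsupp.induction_linear with
  | zero => simp [pairMul_zero_left]
  | add x x' hx hx' =>
    rw [Finsupp.mapDomain_add, pairMul_add_left, hx, hx', pairMul_add_left, Finsupp.mapDomain_add]
  | single p c =>
    rw [Finsupp.mapDomain_single, pairMul_single_single, pairMul_single_single, Prod.map_fst,
      Prod.map_snd, hm_right_unit, hm_right_unit, id,
      ← Finsupp.mapDomain_single (f := (· ++ [a])) (a := p.2),
      pureTensor_mapDomain_right, Finsupp.mapDomain_smul]

lemma pairMul_single_nil_mapDomain_concat (hm_left_unit : ∀ v, m [] v = Finsupp.single v 1)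
    (b : A) (u : List A) (y : (List A × List A) →₀ K) :
    pairMul m (Finsupp.single (u, []) 1) (Finsupp.mapDomain (Prod.map id (· ++ [b])) y)
      = Finsupp.mapDomain (Prod.map id (· ++ [b])) (pairMul m (Finsupp.single (u, []) 1) y) := by
  induction y using Finsupp.induction_linear with
  | zero => simp [pairMul_zero_right]
  | add y y' hy hy' =>
    rw [Finsupp.mapDomain_add, pairMul_add_right, hy, hy', pairMul_add_right,
      Finsupp.mapDomain_add]
  | single q d =>
    rw [Finsupp.mapDomain_single, pairMul_single_single, pairMul_single_single, Prod.map_fst,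
      Prod.map_snd, hm_left_unit, hm_left_unit, id,
      ← Finsupp.mapDomain_single (f := (· ++ [b])) (a := q.2),
      pureTensor_mapDomain_right, Finsupp.mapDomain_smul]

lemma pairMul_mapDomain_concat_mapDomain_concat (br : A → A → A)
    (hm_rec : ∀ u v a b, m (u ++ [a]) (v ++ [b]) =
        Finsupp.mapDomain (· ++ [a]) (m u (v ++ [b]))
        + Finsupp.mapDomain (· ++ [b]) (m (u ++ [a]) v)
        + Finsupp.mapDomain (· ++ [br a b]) (m u v))
    (a b : A) (x y : (List A × List A) →₀ K) :
    pairMul m (Finsupp.mapDomain (Prod.map id (· ++ [a])) x)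
        (Finsupp.mapDomain (Prod.map id (· ++ [b])) y)
      = Finsupp.mapDomain (Prod.map id (· ++ [a]))
          (pairMul m x (Finsupp.mapDomain (Prod.map id (· ++ [b])) y))
        + Finsupp.mapDomain (Prod.map id (· ++ [b]))
            (pairMul m (Finsupp.mapDomain (Prod.map id (· ++ [a])) x) y)
        + Finsupp.mapDomain (Prod.map id (· ++ [br a b])) (pairMul m x y) := by
  induction x using Finsupp.induction_linear with
  | zero => simp [pairMul_zero_left]
  | add x x' hx hx' =>
    simp only [Finsupp.mapDomain_add, pairMul_add_left] at *
    rw [hx, hx']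
    abel
  | single p c =>
    induction y using Finsupp.induction_linear with
    | zero => simp [pairMul_zero_right]
    | add y y' hy hy' =>
      simp only [Finsupp.mapDomain_add, pairMul_add_right] at *
      rw [hy, hy']
      abel
    | single q d =>
      simp only [Finsupp.mapDomain_single, pairMul_single_single, Prod.map_fst, Prod.map_snd, id]
      rw [hm_rec, pureTensor_add_right, pureTensor_add_right, pureTensor_mapDomain_right,
        pureTensor_mapDomain_right, pureTensor_mapDomain_right, smul_add, smul_add,
        Finsupp.mapDomain_smul, Finsupp.mapDomain_smul, Finsupp.mapDomain_smul]

end PairMul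

section Deconcat

variable {A K : Type} [Field K]

lemma deconcat_nil : (deconcat [] : (List A × List A) →₀ K) = Finsupp.single ([], []) 1 := by
  simp [deconcat]

lemma deconcat_concat (u : List A) (a : A) :
    (deconcat (u ++ [a]) : (List A × List A) →₀ K)
      = Finsupp.mapDomain (Prod.map id (· ++ [a])) (deconcat u)
        + Finsupp.single (u ++ [a], []) 1 := by
  rw [deconcat, List.length_append, List.length_singleton, Finset.sum_range_succ, deconcat,
    Finsupp.mapDomain_finsetSum]
  congr 1
  · refine Finset.sum_congr rfl fun i hi => ?_
    have hi : i ≤ u.length := Nat.lt_succ_iff.mp (Finset.mem_range.mp hi)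
    rw [Finsupp.mapDomain_single, List.take_append_of_le_length hi,
      List.drop_append_of_le_length hi, Prod.map_apply, id]
  · rw [List.take_of_length_le (by simp), List.drop_of_length_le (by simp)]

lemma deconcatExt_single (w : List A) (c : K) : deconcatExt (Finsupp.single w c) = c • deconcat w :=
  Finsupp.sum_single_index (zero_smul _ _)

lemma deconcatExt_zero : deconcatExt (0 : List A →₀ K) = 0 :=
  Finsupp.sum_zero_index

lemma deconcatExt_add (x y : List A →₀ K) :
    deconcatExt (x + y) = deconcatExt x + deconcatExt y :=
  Finsupp.sum_add_index' (fun _ => zero_smul _ _) fun _ _ _ => add_smul _ _ _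

lemma deconcatExt_mapDomain_concat (a : A) (x : List A →₀ K) :
    deconcatExt (Finsupp.mapDomain (· ++ [a]) x)
      = Finsupp.mapDomain (Prod.map id (· ++ [a])) (deconcatExt x)
        + Finsupp.mapDomain (fun w => (w, [])) (Finsupp.mapDomain (· ++ [a]) x) := by
  induction x using Finsupp.induction_linear with
  | zero => simp [deconcatExt_zero]
  | add x x' hx hx' =>
    simp only [Finsupp.mapDomain_add, deconcatExt_add, hx, hx']
    abel
  | single w c =>
    simp only [Finsupp.mapDomain_single, deconcatExt_single, deconcat_concat, smul_add,
      Finsupp.mapDomain_smul, Finsupp.smul_single_one]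

end Deconcat

section Step

variable {A K : Type} [Field K] (m : List A → List A → (List A →₀ K))

lemma deconcatExt_quasiShuffle_concat_concat (br : A → A → A)
    (hm_right_unit : ∀ u, m u [] = Finsupp.single u 1)
    (hm_left_unit : ∀ v, m [] v = Finsupp.single v 1)
    (hm_rec : ∀ u v a b, m (u ++ [a]) (v ++ [b]) =
        Finsupp.mapDomain (· ++ [a]) (m u (v ++ [b]))
        + Finsupp.mapDomain (· ++ [b]) (m (u ++ [a]) v)
        + Finsupp.mapDomain (· ++ [br a b]) (m u v))
    (u v : List A) (a b : A)
    (ih_left : deconcatExt (m u (v ++ [b])) = pairMul m (deconcat u) (deconcat (v ++ [b])))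
    (ih_right : deconcatExt (m (u ++ [a]) v) = pairMul m (deconcat (u ++ [a])) (deconcat v))
    (ih : deconcatExt (m u v) = pairMul m (deconcat u) (deconcat v)) :
    deconcatExt (m (u ++ [a]) (v ++ [b]))
      = pairMul m (deconcat (u ++ [a])) (deconcat (v ++ [b])) := by
  have expand_left : deconcatExt (m (u ++ [a]) (v ++ [b]))
      = Finsupp.mapDomain (Prod.map id (· ++ [a])) (deconcatExt (m u (v ++ [b])))
        + Finsupp.mapDomain (Prod.map id (· ++ [b])) (deconcatExt (m (u ++ [a]) v))
        + Finsupp.mapDomain (Prod.map id (· ++ [br a b])) (deconcatExt (m u v))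
        + Finsupp.mapDomain (fun w => (w, [])) (m (u ++ [a]) (v ++ [b])) := by
    rw [hm_rec, deconcatExt_add, deconcatExt_add, deconcatExt_mapDomain_concat,
      deconcatExt_mapDomain_concat, deconcatExt_mapDomain_concat, Finsupp.mapDomain_add,
      Finsupp.mapDomain_add]
    abel
  have expand_right : pairMul m (deconcat (u ++ [a])) (deconcat (v ++ [b]))
      = Finsupp.mapDomain (Prod.map id (· ++ [a])) (pairMul m (deconcat u) (deconcat (v ++ [b])))
        + Finsupp.mapDomain (Prod.map id (· ++ [b])) (pairMul m (deconcat (u ++ [a])) (deconcat v))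
        + Finsupp.mapDomain (Prod.map id (· ++ [br a b])) (pairMul m (deconcat u) (deconcat v))
        + Finsupp.mapDomain (fun w => (w, [])) (m (u ++ [a]) (v ++ [b])) := by
    rw [deconcat_concat u a, deconcat_concat v b]
    simp only [pairMul_add_left, pairMul_add_right, Finsupp.mapDomain_add]
    rw [pairMul_mapDomain_concat_mapDomain_concat m br hm_rec,
      pairMul_mapDomain_concat_single_nil m hm_right_unit,
      pairMul_single_nil_mapDomain_concat m hm_left_unit,
      pairMul_single_nil_single_nil m hm_right_unit]
    abel
  rw [expand_left, expand_right, ih_left, ih_right, ih]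

end Step

theorem deconcat_quasiShuffle_bialgebra_general
    {A : Type} {K : Type} [Field K]
    (br : A → A → A)
    (m : List A → List A → (List A →₀ K))
    (hm_right_unit : ∀ u, m u [] = Finsupp.single u 1)
    (hm_left_unit : ∀ v, m [] v = Finsupp.single v 1)
    (hm_rec : ∀ u v a b, m (u ++ [a]) (v ++ [b]) =
        Finsupp.mapDomain (· ++ [a]) (m u (v ++ [b]))
        + Finsupp.mapDomain (· ++ [b]) (m (u ++ [a]) v)
        + Finsupp.mapDomain (· ++ [br a b]) (m u v)) :
    ∀ u v : List A, deconcatExt (m u v) = pairMul m (deconcat u) (deconcat v) := by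
  intro u
  induction u using List.reverseRecOn with
  | nil =>
    intro v
    rw [hm_left_unit, deconcatExt_single, one_smul, deconcat_nil,
      pairMul_single_nil_nil_left m hm_left_unit]
  | append_singleton u a ihu =>
    intro v
    induction v using List.reverseRecOn with
    | nil =>
      rw [hm_right_unit, deconcatExt_single, one_smul, deconcat_nil,
        pairMul_single_nil_nil_right m hm_right_unit]
    | append_singleton v b ihv =>
      exact deconcatExt_quasiShuffle_concat_concat m br hm_right_unit hm_left_unit hm_rec u v a b
        (ihu _) ihv (ihu v)

/-- **`(K⟨A⟩, *, Δ)` is a bialgebra:** the deconcatenation coproduct is an algebra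
morphism for the quasi-shuffle product, `Δ(u * v) = Δ(u) * Δ(v)`. -/
theorem deconcat_quasiShuffle_bialgebra
    {A : Type} [DecidableEq A] {K : Type} [Field K] [CharZero K]
    (br : A → A → A)
    (hbr_comm : ∀ a b, br a b = br b a)
    (hbr_assoc : ∀ a b c, br (br a b) c = br a (br b c))
    (m : List A → List A → (List A →₀ K))
    (hm_right_unit : ∀ u, m u [] = Finsupp.single u 1)
    (hm_left_unit : ∀ v, m [] v = Finsupp.single v 1)
    (hm_rec : ∀ u v a b, m (u ++ [a]) (v ++ [b]) =
        Finsupp.mapDomain (· ++ [a]) (m u (v ++ [b]))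
        + Finsupp.mapDomain (· ++ [b]) (m (u ++ [a]) v)
        + Finsupp.mapDomain (· ++ [br a b]) (m u v)) :
    ∀ u v : List A, deconcatExt (m u v) = pairMul m (deconcat u) (deconcat v) :=
  deconcat_quasiShuffle_bialgebra_general br m hm_right_unit hm_left_unit hm_rec
end

section
/- The Hoffman logarithm log_H is a two-sided inverse of the Hoffman exponential exp_H on K⟨A⟩: exp_H ∘ log_H = id and log_H ∘ exp_H = id. -/
/-!
For a power series `f = ∑ aₖ Xᵏ` let `Ψ_f(w) = ∑_λ a_{λ₁} ⋯ a_{λₗ} λ ∘ w` (Hoffman–Ihara), so that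
`exp_H = Ψ_{exp X - 1}` and `log_H = Ψ_{log (1 + X)}`. Because the bracket is associative,
bracketing `μ ∘ w` along `λ` is bracketing `w` along the composition `μ.gather λ`; regrouping the
double sum over `(μ, λ)` by the gathered composition turns the weight into a product, over its
blocks, of the composition-sum formula for the coefficients of `f ∘ g`. Hence
`Ψ_f ∘ Ψ_g = Ψ_{f ∘ g}` whenever `g(0) = 0`, while `Ψ_X = id`. The theorem follows because
`exp X - 1` and `log (1 + X)` are inverse to each other under substitution.
-/

/-- Left-to-right nested bracket of a (nonempty) list of letters. -/
def brOfList {A : Type} [Inhabited A] (br : A → A → A) : List A → A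
  | [] => default
  | [a] => a
  | a :: b :: l => br a (brOfList br (b :: l))

/-- The composition action `λ ∘ w`. -/
def compAction {A : Type} [Inhabited A] (br : A → A → A) (w : List A)
    (c : Composition w.length) : List A :=
  (w.splitWrtComposition c).map (brOfList br)

/-- The Hoffman exponential `exp_H(w) = Σ_{λ ∈ C(|w|)} (1/Γ(λ)) λ ∘ w`. -/
noncomputable def expH {A : Type} [Inhabited A] {K : Type} [Field K]
    (br : A → A → A) (w : List A) : List A →₀ K :=
  ∑ c : Composition w.length,
    (((c.blocks.map Nat.factorial).prod : K))⁻¹ • Finsupp.single (compAction br w c) 1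

/-- The Hoffman logarithm
`log_H(w) = Σ_{λ ∈ C(|w|)} ((-1)^{Σ(λ)-|λ|}/Π(λ)) λ ∘ w`. -/
noncomputable def logH {A : Type} [Inhabited A] {K : Type} [Field K]
    (br : A → A → A) (w : List A) : List A →₀ K :=
  ∑ c : Composition w.length,
    (((-1 : K) ^ (c.blocks.sum - c.length)) / ((c.blocks.prod : ℕ) : K)) •
      Finsupp.single (compAction br w c) 1

/-- Linear extension of `exp_H` to `K⟨A⟩`. -/
noncomputable def expHExt {A : Type} [Inhabited A] {K : Type} [Field K]
    (br : A → A → A) (x : List A →₀ K) : List A →₀ K :=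
  x.sum fun w c => c • expH br w

/-- Linear extension of `log_H` to `K⟨A⟩`. -/
noncomputable def logHExt {A : Type} [Inhabited A] {K : Type} [Field K]
    (br : A → A → A) (x : List A →₀ K) : List A →₀ K :=
  x.sum fun w c => c • logH br w

namespace List

variable {α β : Type*}

theorem splitWrtCompositionAux_map (f : α → β) (l : List α) (ns : List ℕ) :
    (l.map f).splitWrtCompositionAux ns = (l.splitWrtCompositionAux ns).map (map f) := by
  induction ns generalizing l with
  | nil => rfl
  | cons n ns ih => simp [splitWrtCompositionAux_cons, ← map_take, ← map_drop, ih]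

theorem splitWrtComposition_map {n : ℕ} (f : α → β) (l : List α) (c : Composition n) :
    (l.map f).splitWrtComposition c = (l.splitWrtComposition c).map (map f) :=
  splitWrtCompositionAux_map f l c.blocks

theorem splitWrtComposition_ones (l : List α) :
    l.splitWrtComposition (Composition.ones l.length) = l.map fun a => [a] := by
  rw [eq_iff_flatten_eq, flatten_splitWrtComposition, map_length_splitWrtComposition,
    ← flatMap_def, flatMap_singleton', map_map]
  simp [Composition.ones_blocks, Function.comp_def, map_const']

theorem flatten_splitWrtComposition_of_length_eq {n : ℕ} {l : List α} (c : Composition n)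
    (h : l.length = n) : (l.splitWrtComposition c).flatten = l :=
  flatten_splitWrtCompositionAux (c.blocks_sum.trans h.symm)

theorem map_flatten_splitWrtComposition_splitWrtComposition (l : List α)
    (a : Composition l.length) (b : Composition a.length) :
    ((l.splitWrtComposition a).splitWrtComposition b).map flatten
      = l.splitWrtComposition (a.gather b) := by
  refine eq_iff_flatten_eq.2 ⟨?_, ?_⟩
  · rw [← flatten_flatten, flatten_splitWrtComposition_of_length_eq b
      (length_splitWrtComposition l a), flatten_splitWrtComposition, flatten_splitWrtComposition]
  · have hlen : length ∘ flatten = sum ∘ map (length (α := α)) := by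
      funext L; exact length_flatten
    rw [map_length_splitWrtComposition, map_map, hlen, ← map_map, ← splitWrtComposition_map,
      map_length_splitWrtComposition]
    rfl

theorem ofFn_toFinsupp {M : Type*} [Zero M] (l : List M)
    [DecidablePred fun i => l.getD i 0 ≠ 0] {m : ℕ} (hm : l.length = m) :
    ofFn (fun k : Fin m => l.toFinsupp k) = l := by
  subst hm
  exact ext_getElem (by simp) fun i _ _ => by simp [toFinsupp_apply]

end List

theorem Composition.prod_map_sigmaEquivSigmaPi_symm {M : Type*} [CommMonoid M] {n : ℕ}
    (u v : ℕ → M) (q : Σ c : Composition n, ∀ i : Fin c.length, Composition (c.blocksFun i)) :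
    (((sigmaEquivSigmaPi n).symm q).1.blocks.map u).prod
        * (((sigmaEquivSigmaPi n).symm q).2.blocks.map v).prod
      = ∏ i, v (q.2 i).length * ((q.2 i).blocks.map u).prod := by
  change ((List.ofFn fun i => (q.2 i).blocks).flatten.map u).prod
      * ((List.ofFn fun i => (q.2 i).length).map v).prod = _
  rw [List.map_flatten, List.prod_flatten, List.map_ofFn, List.map_ofFn, List.map_ofFn,
    List.prod_ofFn, List.prod_ofFn, Finset.prod_mul_distrib, mul_comm]
  rfl


namespace PowerSeries

open Finset

theorem coeff_pow_eq_sum_composition {R : Type*} [CommSemiring R] {g : R⟦X⟧}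
    (hg : constantCoeff g = 0) (m n : ℕ) :
    coeff n (g ^ m) = ∑ c : Composition n with c.length = m, (c.blocks.map (coeff · g)).prod := by
  classical
  have hweight (l : ℕ → ℕ) : ∏ i ∈ range m, coeff (l i) g
      = ((List.ofFn fun k : Fin m => l k).map (coeff · g)).prod := by
    rw [List.map_ofFn, List.prod_ofFn]
    exact (Fin.prod_univ_eq_prod_range (fun i => coeff (l i) g) m).symm
  have hpos (l : ℕ → ℕ) (hl : ∏ i ∈ range m, coeff (l i) g ≠ 0) (i : ℕ) (hi : i < m) :
      0 < l i := by
    refine Nat.pos_of_ne_zero fun h0 => hl (prod_eq_zero (mem_range.2 hi) ?_)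
    rw [h0, coeff_zero_eq_constantCoeff_apply, hg]
  have hsupp {l : ℕ →₀ ℕ} (hl : l ∈ finsuppAntidiag (range m) n) {i : ℕ} (hi : ¬i < m) :
      l i = 0 :=
    Finsupp.notMem_support_iff.1 fun h => hi (mem_range.1 ((mem_finsuppAntidiag.1 hl).2 h))
  rw [coeff_pow]
  refine sum_bij_ne_zero (fun l hl hl0 => ⟨List.ofFn fun k : Fin m => l k,
      fun hx => by obtain ⟨k, rfl⟩ := List.mem_ofFn.1 hx; exact hpos l hl0 k k.2,
      by rw [List.sum_ofFn, Fin.sum_univ_eq_sum_range (fun i => l i),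
        (mem_finsuppAntidiag.1 hl).1]⟩)
    (fun l _ _ => by simp [Composition.length]) ?_ ?_ (fun l _ _ => hweight l)
  · intro l hl _ l' hl' _ h
    have h' := List.ofFn_injective (congrArg Composition.blocks h)
    ext i
    by_cases hi : i < m
    · exact congrFun h' ⟨i, hi⟩
    · rw [hsupp hl hi, hsupp hl' hi]
  · intro c hc hc0
    have hm : c.blocks.length = m := (mem_filter.1 hc).2
    refine ⟨c.blocks.toFinsupp, mem_finsuppAntidiag.2 ⟨?_, hm ▸ List.toFinsupp_support_subset _⟩,
      by rwa [hweight, List.ofFn_toFinsupp _ hm], Composition.ext (List.ofFn_toFinsupp _ hm)⟩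
    rw [← Fin.sum_univ_eq_sum_range, ← List.sum_ofFn, List.ofFn_toFinsupp _ hm, c.blocks_sum]

theorem coeff_subst_eq_sum_composition {R : Type*} [CommRing R] (f : R⟦X⟧) {g : R⟦X⟧}
    (hg : constantCoeff g = 0) (n : ℕ) :
    coeff n (f.subst g)
      = ∑ c : Composition n, coeff c.length f * (c.blocks.map (coeff · g)).prod := by
  have hsupp : (Function.support fun d => coeff d f • coeff n (g ^ d)) ⊆ range (n + 1) := by
    intro d hd
    rw [Function.mem_support, coeff_pow_eq_sum_composition hg] at hd
    obtain ⟨c, hc, -⟩ := exists_ne_zero_of_sum_ne_zero (right_ne_zero_of_smul hd)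
    rw [coe_range, Set.mem_Iio, ← (mem_filter.1 hc).2]
    exact Nat.lt_succ_of_le c.length_le
  rw [coeff_subst' (HasSubst.of_constantCoeff_zero' hg), finsum_eq_sum_of_support_subset _ hsupp,
    ← sum_fiberwise_of_maps_to (g := Composition.length) fun c _ =>
      mem_range.2 (Nat.lt_succ_of_le c.length_le)]
  refine sum_congr rfl fun d _ => ?_
  rw [coeff_pow_eq_sum_composition hg, smul_eq_mul, mul_sum]
  exact sum_congr rfl fun c hc => by rw [(mem_filter.1 hc).2]

theorem subst_eq_X_of_subst_eq_X {R : Type*} [CommRing R] {f g : R⟦X⟧}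
    (hg : constantCoeff g = 0) (hg₁ : IsUnit (coeff 1 g))
    (h : f.subst g = X) : g.subst f = X := by
  have hQ := HasSubst.substInvOfIsUnit g hg₁
  have hf_eq : f = g.substInvOfIsUnit hg₁ := calc
    f = PowerSeries.subst (g.substInvOfIsUnit hg₁) (f.subst g) := by
      rw [subst_comp_subst_apply (HasSubst.of_constantCoeff_zero' hg) hQ,
        subst_substInvOfIsUnit_right g hg hg₁, X_subst]
    _ = g.substInvOfIsUnit hg₁ := by rw [h, subst_X hQ]
  rw [hf_eq, subst_substInvOfIsUnit_right g hg hg₁]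

variable (A : Type*) [CommRing A] [Algebra ℚ A]

theorem constantCoeff_exp_sub_one : constantCoeff (exp A - 1) = 0 := by
  simp [constantCoeff_exp]

theorem log_subst_exp_sub_one : (log A).subst (exp A - 1) = X := by
  have := IsAddTorsionFree.of_module_rat A
  have hE : HasSubst (exp A - 1) := HasSubst.of_constantCoeff_zero' (constantCoeff_exp_sub_one A)
  have hlog' : d⁄dX A (log A) * (1 + X) = 1 := by
    rw [deriv_log]
    ext (_ | n) <;> simp [mul_add, coeff_succ_mul_X, pow_succ]
  refine derivative.ext ?_ ?_
  · rw [derivative_subst hE, map_sub, derivative_exp, Derivation.map_one_eq_zero, sub_zero,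
      derivative_X]
    calc (d⁄dX A (log A)).subst (exp A - 1) * exp A
        = substAlgHom hE (d⁄dX A (log A) * (1 + X)) := by
          rw [map_mul, map_add, map_one, substAlgHom_X, coe_substAlgHom, add_sub_cancel]
      _ = 1 := by rw [hlog', map_one]
  · rw [constantCoeff_X]
    exact constantCoeff_subst_eq_zero (constantCoeff_exp_sub_one A) _ constantCoeff_log

theorem exp_sub_one_subst_log : (exp A - 1).subst (log A) = X :=
  subst_eq_X_of_subst_eq_X (constantCoeff_exp_sub_one A) (by simp) (log_subst_exp_sub_one A)

end PowerSeries

section Bracket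

variable {A : Type} [Inhabited A] (br : A → A → A)

theorem brOfList_cons (a : A) {l : List A} (hl : l ≠ []) :
    brOfList br (a :: l) = br a (brOfList br l) := by
  obtain ⟨b, t, rfl⟩ := List.exists_cons_of_ne_nil hl
  rfl

theorem brOfList_append (hassoc : ∀ a b c, br (br a b) c = br a (br b c))
    {l₁ l₂ : List A} (h₁ : l₁ ≠ []) (h₂ : l₂ ≠ []) :
    brOfList br (l₁ ++ l₂) = br (brOfList br l₁) (brOfList br l₂) := by
  induction l₁ with
  | nil => contradiction
  | cons a t ih =>
    rcases eq_or_ne t [] with rfl | ht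
    · exact brOfList_cons br a h₂
    · rw [List.cons_append, brOfList_cons br a (by simp [ht]), ih ht, brOfList_cons br a ht,
        hassoc]

theorem brOfList_map_brOfList (hassoc : ∀ a b c, br (br a b) c = br a (br b c))
    {L : List (List A)} (hL : ∀ l ∈ L, l ≠ []) :
    brOfList br (L.map (brOfList br)) = brOfList br L.flatten := by
  induction L with
  | nil => rfl
  | cons l T ih =>
    rcases eq_or_ne T [] with rfl | hT
    · simp [brOfList]
    · have hT' : T.flatten ≠ [] := by
        obtain ⟨t, T', rfl⟩ := List.exists_cons_of_ne_nil hT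
        simpa using fun h => absurd h (hL t (by simp))
      rw [List.map_cons, brOfList_cons br _ (by simpa using hT),
        ih fun l hl => hL l (by simp [hl]), List.flatten_cons,
        brOfList_append br hassoc (hL l (by simp)) hT']

end Bracket

section CompAction

variable {A : Type} [Inhabited A] (br : A → A → A)

theorem length_compAction (w : List A) (c : Composition w.length) :
    (compAction br w c).length = c.length := by
  simp [compAction]

theorem compAction_ones (w : List A) : compAction br w (Composition.ones w.length) = w := by
  rw [compAction, List.splitWrtComposition_ones, List.map_map]
  exact List.map_id' w

theorem compAction_compAction (hassoc : ∀ a b c, br (br a b) c = br a (br b c))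
    (w : List A) (a : Composition w.length) (b : Composition a.length) :
    compAction br (compAction br w a) (b.cast (length_compAction br w a).symm)
      = compAction br w (a.gather b) := by
  have hne : ∀ L ∈ (w.splitWrtComposition a).splitWrtComposition b, ∀ l ∈ L, l ≠ [] := by
    intro L hL l hl
    have hw : l ∈ w.splitWrtComposition a := by
      rw [← List.flatten_splitWrtComposition_of_length_eq b
        (List.length_splitWrtComposition w a)]
      exact List.mem_flatten_of_mem hL hl
    exact List.ne_nil_of_length_pos (List.length_pos_of_mem_splitWrtComposition hw)
  calc compAction br (compAction br w a) (b.cast (length_compAction br w a).symm)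
      = ((w.splitWrtComposition a).splitWrtComposition b).map
          (brOfList br ∘ List.map (brOfList br)) := by
        simp only [compAction]
        rw [List.splitWrtComposition_map, List.map_map]
        rfl
    _ = ((w.splitWrtComposition a).splitWrtComposition b).map (brOfList br ∘ List.flatten) :=
        List.map_congr_left fun L hL => brOfList_map_brOfList br hassoc (hne L hL)
    _ = compAction br w (a.gather b) := by
        rw [compAction, ← List.map_flatten_splitWrtComposition_splitWrtComposition, List.map_map]

end CompAction

open PowerSeries

section HoffmanMap

variable {A : Type} [Inhabited A] {R : Type*} [CommRing R] (br : A → A → A)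

/-- Hoffman–Ihara's `Ψ_f`. -/
noncomputable def hoffmanMap (f : R⟦X⟧) : (List A →₀ R) →ₗ[R] (List A →₀ R) :=
  Finsupp.linearCombination R fun w => ∑ c : Composition w.length,
    (c.blocks.map (coeff · f)).prod • Finsupp.single (compAction br w c) 1

theorem hoffmanMap_single (f : R⟦X⟧) (w : List A) :
    hoffmanMap br f (Finsupp.single w 1) = ∑ c : Composition w.length,
      (c.blocks.map (coeff · f)).prod • Finsupp.single (compAction br w c) 1 := by
  rw [hoffmanMap, Finsupp.linearCombination_single, one_smul]

theorem hoffmanMap_X : hoffmanMap br (X : R⟦X⟧) = LinearMap.id := by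
  refine Finsupp.lhom_ext' fun w => LinearMap.ext_ring ?_
  rw [LinearMap.comp_apply, Finsupp.lsingle_apply, hoffmanMap_single,
    Finset.sum_eq_single (Composition.ones w.length)]
  · simp [Composition.ones_blocks, compAction_ones]
  · intro c _ hc
    obtain ⟨k, hk, hk1⟩ := Composition.ne_ones_iff.1 hc
    rw [List.prod_eq_zero (List.mem_map.2 ⟨k, hk, by rw [coeff_X, if_neg hk1.ne']⟩), zero_smul]
  · simp

theorem hoffmanMap_comp (hassoc : ∀ a b c, br (br a b) c = br a (br b c)) (f : R⟦X⟧)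
    {g : R⟦X⟧} (hg : constantCoeff g = 0) :
    hoffmanMap br f ∘ₗ hoffmanMap br g = hoffmanMap br (f.subst g) := by
  refine Finsupp.lhom_ext' fun w => LinearMap.ext_ring ?_
  simp only [LinearMap.comp_apply, Finsupp.lsingle_apply, hoffmanMap_single, map_sum, map_smul]
  have hinner : ∀ a : Composition w.length,
      ∑ b : Composition (compAction br w a).length, (b.blocks.map (coeff · f)).prod •
          Finsupp.single (compAction br (compAction br w a) b) (1 : R)
        = ∑ b : Composition a.length, (b.blocks.map (coeff · f)).prod •
          Finsupp.single (compAction br w (a.gather b)) 1 := by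
    intro a
    refine (Fintype.sum_equiv (Equiv.cast (congrArg Composition (length_compAction br w a).symm))
      _ _ fun b => ?_).symm
    rw [Equiv.cast_apply, ← Composition.cast_eq_cast b (length_compAction br w a).symm,
      compAction_compAction br hassoc]
    rfl
  simp only [hinner, Finset.smul_sum, smul_smul]
  -- reindex `(a, b)` by `c = a.gather b` and the pieces of `a` lying in the blocks of `c`
  rw [Finset.sum_sigma', Finset.univ_sigma_univ,
    ← (Composition.sigmaEquivSigmaPi w.length).symm.sum_comp, Fintype.sum_sigma]
  refine Fintype.sum_congr _ _ fun c => ?_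
  have hgather : ∀ d : ∀ i : Fin c.length, Composition (c.blocksFun i),
      ((Composition.sigmaEquivSigmaPi w.length).symm ⟨c, d⟩).1.gather
        ((Composition.sigmaEquivSigmaPi w.length).symm ⟨c, d⟩).2 = c :=
    fun d => congrArg Sigma.fst ((Composition.sigmaEquivSigmaPi w.length).apply_symm_apply ⟨c, d⟩)
  simp only [hgather, Composition.prod_map_sigmaEquivSigmaPi_symm, ← Finset.sum_smul]
  rw [← Fintype.prod_sum fun i (d : Composition (c.blocksFun i)) =>
    coeff d.length f * (d.blocks.map (coeff · g)).prod]
  simp only [← coeff_subst_eq_sum_composition f hg]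
  rw [← c.ofFn_blocksFun, List.map_ofFn, List.prod_ofFn]
  rfl

end HoffmanMap

section HoffmanExpLog

variable {A : Type} [Inhabited A] {K : Type} [Field K] [CharZero K] (br : A → A → A)

theorem prod_map_coeff_exp_sub_one {l : List ℕ} (hl : ∀ k ∈ l, 0 < k) :
    (l.map (coeff · (exp K - 1))).prod = ((l.map Nat.factorial).prod : K)⁻¹ := by
  rw [Nat.cast_list_prod, List.prod_inv, List.map_map, List.map_map]
  refine congrArg List.prod (List.map_congr_left fun k hk => ?_)
  simp [coeff_exp, (hl k hk).ne']

theorem prod_map_coeff_log {l : List ℕ} (hl : ∀ k ∈ l, 0 < k) :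
    (l.map (coeff · (log K))).prod = (-1 : K) ^ (l.sum - l.length) / (l.prod : K) := by
  induction l with
  | nil => simp
  | cons a t ih =>
    obtain ⟨b, rfl⟩ : ∃ b, a = b + 1 := ⟨a - 1, by have := hl a (by simp); omega⟩
    have ht := List.length_le_sum_of_one_le t fun k hk => hl k (by simp [hk])
    have hexp : ((b + 1) :: t).sum - ((b + 1) :: t).length = b + (t.sum - t.length) := by
      simp only [List.sum_cons, List.length_cons]
      omega
    rw [List.map_cons, List.prod_cons, ih fun k hk => hl k (by simp [hk]), hexp, coeff_log,
      if_neg b.succ_ne_zero, List.prod_cons, Nat.cast_mul, map_div₀, map_pow, map_neg, map_one,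
      map_natCast]
    ring

theorem expHExt_eq_hoffmanMap (x : List A →₀ K) : expHExt br x = hoffmanMap br (exp K - 1) x := by
  rw [expHExt, hoffmanMap, Finsupp.linearCombination_apply]
  refine Finsupp.sum_congr fun w _ => congrArg _ (Finset.sum_congr rfl fun c _ => ?_)
  rw [prod_map_coeff_exp_sub_one fun k hk => c.blocks_pos hk]

theorem logHExt_eq_hoffmanMap (x : List A →₀ K) : logHExt br x = hoffmanMap br (log K) x := by
  rw [logHExt, hoffmanMap, Finsupp.linearCombination_apply]
  refine Finsupp.sum_congr fun w _ => congrArg _ (Finset.sum_congr rfl fun c _ => ?_)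
  rw [prod_map_coeff_log fun k hk => c.blocks_pos hk]

end HoffmanExpLog

theorem expH_logH_inverse_general
    {A : Type} [Inhabited A] {K : Type} [Field K] [CharZero K]
    (br : A → A → A)
    (hbr_assoc : ∀ a b c, br (br a b) c = br a (br b c)) :
    (∀ x : List A →₀ K, expHExt br (logHExt br x) = x)
      ∧ (∀ x : List A →₀ K, logHExt br (expHExt br x) = x) := by
  refine ⟨fun x => ?_, fun x => ?_⟩
  · rw [logHExt_eq_hoffmanMap, expHExt_eq_hoffmanMap, ← LinearMap.comp_apply,
      hoffmanMap_comp br hbr_assoc _ constantCoeff_log, exp_sub_one_subst_log, hoffmanMap_X,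
      LinearMap.id_apply]
  · rw [expHExt_eq_hoffmanMap, logHExt_eq_hoffmanMap, ← LinearMap.comp_apply,
      hoffmanMap_comp br hbr_assoc _ (constantCoeff_exp_sub_one K), log_subst_exp_sub_one,
      hoffmanMap_X, LinearMap.id_apply]

/-- **`log_H` is a two-sided inverse of `exp_H` on `K⟨A⟩`:**
`exp_H ∘ log_H = id` and `log_H ∘ exp_H = id`. -/
theorem expH_logH_inverse
    {A : Type} [Inhabited A] [DecidableEq A] {K : Type} [Field K] [CharZero K]
    (br : A → A → A)
    (hbr_comm : ∀ a b, br a b = br b a)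
    (hbr_assoc : ∀ a b c, br (br a b) c = br a (br b c)) :
    (∀ x : List A →₀ K, expHExt br (logHExt br x) = x)
      ∧ (∀ x : List A →₀ K, logHExt br (expHExt br x) = x) :=
  expH_logH_inverse_general br hbr_assoc
end
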